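/- Let Σ = {P(x) → ∃y R(x,y)}, D = {P(c)}, q1 the Boolean CQ Q ← R(x,y), and q2 the Boolean CQ Q ← R(x,y), P(y). Then cert(q1,D,Σ) ≠ ∅ and cert(q2,D,Σ) = ∅; moreover, for every set Σ′ of full single-head TGDs over a schema containing P and R (TGDs containing no constants), if () ∈ cert(q1,D,Σ′) then () ∈ cert(q2,D,Σ′). -/
import Mathlib


/-! ### Core: terms, atoms, TGDs, CQs, certain answers -/

/-- Terms: constants ⊕ nulls ⊕ variables (each indexed by a natural number). -/
abbrev Term' : Type := ℕ ⊕ ℕ ⊕ ℕ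

/-- The constant `n`. -/
def Term'.cst (n : ℕ) : Term' := Sum.inl n
/-- The labeled null `n`. -/
def Term'.nul (n : ℕ) : Term' := Sum.inr (Sum.inl n)
/-- The variable `n`. -/
def Term'.var (n : ℕ) : Term' := Sum.inr (Sum.inr n)

def Term'.isVarB : Term' → Bool
  | Sum.inr (Sum.inr _) => true
  | _ => false

def Term'.isConstB : Term' → Bool
  | Sum.inl _ => true
  | _ => false

def Term'.isNullB : Term' → Bool
  | Sum.inr (Sum.inl _) => true
  | _ => false

/-- A (relational) atom: a predicate symbol together with a list of argument terms. -/
abbrev Atom : Type := ℕ × List Term'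

/-- Apply a substitution to an atom. -/
def mapAtom (h : Term' → Term') (a : Atom) : Atom := (a.1, a.2.map h)

/-- A substitution is the identity on constants. -/
def constPres (h : Term' → Term') : Prop := ∀ n, h (Term'.cst n) = Term'.cst n

/-- The variable `v` occurs in the set of atoms `A`. -/
def occursIn (A : Finset Atom) (v : ℕ) : Prop := ∃ a ∈ A, Term'.var v ∈ a.2

/-- A fact is an atom that contains only constants. -/
def isFact (a : Atom) : Prop := ∀ t ∈ a.2, Term'.isConstB t = true

/-- A tuple-generating dependency (TGD) `body → ∃ z̄ head`; the existentially
quantified variables are exactly the head variables not occurring in the body. -/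
structure TGD where
  body : Finset Atom
  head : Finset Atom
deriving DecidableEq

/-- A TGD is well-formed if its body and head contain only variables
(no constants and no nulls). -/
def TGD.wf (σ : TGD) : Prop := ∀ a ∈ σ.body ∪ σ.head, ∀ t ∈ a.2, Term'.isVarB t = true

/-- `v` is an existentially quantified variable of `σ`. -/
def isExistVar (σ : TGD) (v : ℕ) : Prop := occursIn σ.head v ∧ ¬ occursIn σ.body v

/-- An instance `I` (a set of atoms) satisfies a TGD: every homomorphism of the body
into `I` extends (on the body variables, in particular on the frontier) to a
homomorphism of the head into `I`. -/
def satTGD (I : Set Atom) (σ : TGD) : Prop :=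
  ∀ h : Term' → Term', constPres h → (∀ a ∈ σ.body, mapAtom h a ∈ I) →
    ∃ h' : Term' → Term', constPres h' ∧
      (∀ v, occursIn σ.body v → h' (Term'.var v) = h (Term'.var v)) ∧
      (∀ a ∈ σ.head, mapAtom h' a ∈ I)

/-- A conjunctive query: a tuple of output terms and a finite set of body atoms. -/
structure CQ where
  output : List Term'
  atoms : Finset Atom
deriving DecidableEq

/-- Well-formed CQ: no nulls in the atoms, and the output tuple consists of variables. -/
def CQ.wf (q : CQ) : Prop :=
  (∀ a ∈ q.atoms, ∀ t ∈ a.2, Term'.isNullB t = false) ∧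
  (∀ t ∈ q.output, Term'.isVarB t = true)

/-- The evaluation `q(I)` of a CQ over an instance: all tuples of constants obtained as
homomorphic images of the output tuple. -/
def CQ.eval (q : CQ) (I : Set Atom) : Set (List ℕ) :=
  { c | ∃ h : Term' → Term', constPres h ∧ (∀ a ∈ q.atoms, mapAtom h a ∈ I) ∧
        q.output.map h = c.map Term'.cst }

/-- The certain answers to `q` w.r.t. the database `D` and the set `S` of TGDs. -/
def cert (q : CQ) (D : Finset Atom) (S : Finset TGD) : Set (List ℕ) :=
  { c | ∀ I : Set Atom, ↑D ⊆ I → (∀ σ ∈ S, satTGD I σ) → c ∈ q.eval I }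

/-- The active domain of a database: all constants occurring in it. -/
def adom (D : Finset Atom) : Set ℕ := { n | ∃ a ∈ D, Term'.cst n ∈ a.2 }

/-- The set of TGDs `{P(x) → ∃y R(x,y)}` (with `P` the predicate `0` and `R` the
predicate `1`). -/
def sigmaPR : Finset TGD :=
  {⟨{(0, [Term'.var 0])}, {(1, [Term'.var 0, Term'.var 1])}⟩}

/-- The database `D = {P(c)}` (with `c` the constant `0`). -/
def dPc : Finset Atom := {(0, [Term'.cst 0])}

/-- The Boolean CQ `Q ← R(x,y)`. -/
def q1PR : CQ := ⟨[], {(1, [Term'.var 0, Term'.var 1])}⟩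

/-- The Boolean CQ `Q ← R(x,y), P(y)`. -/
def q2PR : CQ := ⟨[], {(1, [Term'.var 0, Term'.var 1]), (0, [Term'.var 1])}⟩

/-- With `Σ = {P(x) → ∃y R(x,y)}` and `D = {P(c)}`:
`cert(q1,D,Σ) ≠ ∅` and `cert(q2,D,Σ) = ∅`, while for every set `Σ'` of full
single-head TGDs (without constants), `() ∈ cert(q1,D,Σ')` implies
`() ∈ cert(q2,D,Σ')`. -/
theorem full_tgds_cannot_separate :
    cert q1PR dPc sigmaPR ≠ ∅ ∧ cert q2PR dPc sigmaPR = ∅ ∧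
    ∀ S' : Finset TGD,
      (∀ σ ∈ S', TGD.wf σ ∧ σ.head.card = 1 ∧
        (∀ v, occursIn σ.head v → occursIn σ.body v)) →
      [] ∈ cert q1PR dPc S' → [] ∈ cert q2PR dPc S' := by
  refine ⟨?_, ?_, ?_⟩
  · -- cert q1 ≠ ∅
    apply Set.Nonempty.ne_empty
    refine ⟨[], ?_⟩
    intro I hD hS
    have hσ := hS ⟨{(0, [Term'.var 0])}, {(1, [Term'.var 0, Term'.var 1])}⟩
      (by simp [sigmaPR])
    have hP : ((0, [Term'.cst 0]) : Atom) ∈ I := hD (by simp [dPc])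
    obtain ⟨h', hcp', _, hhead⟩ := hσ
      (fun t => if t = Term'.var 0 then Term'.cst 0 else t)
      (by intro n; simp [Term'.cst, Term'.var])
      (by intro a ha
          simp only [Finset.mem_singleton] at ha
          subst ha
          simpa [mapAtom] using hP)
    refine ⟨h', hcp', ?_, by simp [q1PR]⟩
    intro a ha
    simp only [q1PR, Finset.mem_singleton] at ha
    subst ha
    exact hhead _ (by simp)
  · -- cert q2 = ∅
    ext c
    simp only [Set.mem_empty_iff_false, iff_false]
    intro hc
    set I : Set Atom := {(0, [Term'.cst 0]), (1, [Term'.cst 0, Term'.cst 1])} with hI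
    have hD : ↑dPc ⊆ I := by
      intro a ha
      simp only [dPc, Finset.coe_singleton, Set.mem_singleton_iff] at ha
      simp [hI, ha]
    have hS : ∀ σ ∈ sigmaPR, satTGD I σ := by
      intro σ hσ
      simp only [sigmaPR, Finset.mem_singleton] at hσ
      subst hσ
      intro h hcp hbody
      have hb := hbody (0, [Term'.var 0]) (by simp)
      simp only [mapAtom, List.map, hI, Set.mem_insert_iff, Set.mem_singleton_iff,
        Prod.mk.injEq, List.cons.injEq, and_true] at hb
      have hv0 : h (Term'.var 0) = Term'.cst 0 := by
        rcases hb with ⟨_, hb⟩ | ⟨hb, _⟩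
        · exact hb
        · exact absurd hb (by norm_num)
      refine ⟨fun t => if t = Term'.var 1 then Term'.cst 1 else h t, ?_, ?_, ?_⟩
      · intro n
        simpa [Term'.cst, Term'.var] using hcp n
      · intro v hv
        simp only [occursIn, Finset.mem_singleton] at hv
        obtain ⟨a, ha, hva⟩ := hv
        subst ha
        simp only [List.mem_singleton] at hva
        have hv0' : v = 0 := by simpa [Term'.var] using hva
        subst hv0'
        simp [Term'.var]
      · intro a ha
        simp only [Finset.mem_singleton] at ha
        subst ha
        simp only [mapAtom, List.map, hI, Set.mem_insert_iff, Set.mem_singleton_iff,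
          Prod.mk.injEq, List.cons.injEq]
        simpa [Term'.var] using hv0
    obtain ⟨h, hcp, hat, _⟩ := hc I hD hS
    have h1 := hat (1, [Term'.var 0, Term'.var 1]) (by simp [q2PR])
    have h2 := hat (0, [Term'.var 1]) (by simp [q2PR])
    simp only [mapAtom, List.map, hI, Set.mem_insert_iff, Set.mem_singleton_iff,
      Prod.mk.injEq, List.cons.injEq, and_true] at h1 h2
    have hv1 : h (Term'.var 1) = Term'.cst 1 := by
      rcases h1 with ⟨hb, _⟩ | ⟨_, _, hb⟩
      · exact absurd hb (by norm_num)
      · exact hb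
    rcases h2 with ⟨_, hb⟩ | ⟨hb, _⟩
    · rw [hv1] at hb
      exact absurd hb (by simp [Term'.cst])
    · exact absurd hb (by norm_num)
  · -- full single-head TGDs
    intro S' hS' h1 I hD hS
    set K : Set Atom := { a | a ∈ I ∧ ∀ t ∈ a.2, t = Term'.cst 0 } with hK
    have hP : ((0, [Term'.cst 0]) : Atom) ∈ I := hD (by simp [dPc])
    have hDK : ↑dPc ⊆ K := by
      intro a ha
      simp only [dPc, Finset.coe_singleton, Set.mem_singleton_iff] at ha
      subst ha
      exact ⟨hP, by simp⟩
    have hKsat : ∀ σ ∈ S', satTGD K σ := by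
      intro σ hσ h hcp hbody
      obtain ⟨hwf, _, hfull⟩ := hS' σ hσ
      obtain ⟨h'', hcp'', hagree, hhead⟩ := hS σ hσ h hcp
        (fun a ha => (hbody a ha).1)
      refine ⟨h'', hcp'', hagree, ?_⟩
      intro a ha
      refine ⟨hhead a ha, ?_⟩
      intro t' ht'
      simp only [mapAtom, List.mem_map] at ht'
      obtain ⟨t, ht, rfl⟩ := ht'
      have hvar := hwf a (Finset.mem_union_right _ ha) t ht
      obtain ⟨v, rfl⟩ : ∃ v, t = Term'.var v := by
        rcases t with n | n | n
        · simp [Term'.isVarB] at hvar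
        · simp [Term'.isVarB] at hvar
        · exact ⟨n, rfl⟩
      obtain ⟨b, hb, hvb⟩ := hfull v ⟨a, ha, ht⟩
      rw [hagree v ⟨b, hb, hvb⟩]
      have hbK := hbody b hb
      exact hbK.2 _ (List.mem_map.2 ⟨_, hvb, rfl⟩)
    obtain ⟨h, hcp, hat, _⟩ := h1 K hDK hKsat
    have hR := hat (1, [Term'.var 0, Term'.var 1]) (by simp [q1PR])
    obtain ⟨hRI, hRc⟩ := hR
    have hv0 : h (Term'.var 0) = Term'.cst 0 := hRc _ (by simp [mapAtom])
    have hv1 : h (Term'.var 1) = Term'.cst 0 := hRc _ (by simp [mapAtom])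
    refine ⟨fun t => match t with | Sum.inl n => Sum.inl n | _ => Term'.cst 0,
      fun n => rfl, ?_, by simp [q2PR]⟩
    intro a ha
    simp only [q2PR, Finset.mem_insert, Finset.mem_singleton] at ha
    rcases ha with rfl | rfl
    · have : mapAtom h (1, [Term'.var 0, Term'.var 1]) = (1, [Term'.cst 0, Term'.cst 0]) := by
        simp [mapAtom, hv0, hv1]
      rw [this] at hRI
      simpa [mapAtom, Term'.var, Term'.cst] using hRI
    · simpa [mapAtom, Term'.var, Term'.cst] using hP
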